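/- If H ∈ ℝ₊^{r×n} satisfies SSC1 (i.e., C ⊆ cone(H)) with r ≥ 2, then every row of H has at least one zero entry. (Equivalently, no row of H can be strictly positive.) -/

import Mathlib

noncomputable def enorm' {r : ℕ} (x : Fin r → ℝ) : ℝ := Real.sqrt (∑ i, (x i) ^ 2)

def sscCone (r : ℕ) : Set (Fin r → ℝ) :=
  {x | Real.sqrt ((r : ℝ) - 1) * enorm' x ≤ ∑ i, x i}

def coneOf {r n : ℕ} (H : Matrix (Fin r) (Fin n) ℝ) : Set (Fin r → ℝ) :=
  {x | ∃ y : Fin n → ℝ, (∀ j, 0 ≤ y j) ∧ H.mulVec y = x}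

/-! The vector `e - eᵢ` lies in the SSC1 cone, so it is `H y` for some `y ≥ 0`. Its `i`-th
entry is `0`, so if row `i` of `H` were strictly positive this would force `y = 0`, hence
`e - eᵢ = 0`, which fails as soon as `r ≥ 2`. -/

theorem sum_one_sub_single {r : ℕ} (i : Fin r) :
    ∑ k, (1 - Pi.single i 1 : Fin r → ℝ) k = r - 1 := by
  simp [Finset.sum_sub_distrib]

theorem enorm'_one_sub_single {r : ℕ} (i : Fin r) :
    enorm' (1 - Pi.single i 1 : Fin r → ℝ) = Real.sqrt (r - 1) := by
  have hsq : ∀ k, (1 - Pi.single i 1 : Fin r → ℝ) k ^ 2 =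
      (1 - Pi.single i 1 : Fin r → ℝ) k := by
    intro k
    by_cases hk : k = i <;> simp [hk]
  simp only [enorm', hsq, sum_one_sub_single]

theorem one_sub_single_mem_sscCone {r : ℕ} (i : Fin r) :
    (1 - Pi.single i 1 : Fin r → ℝ) ∈ sscCone r := by
  have hr : (0 : ℝ) ≤ r - 1 := by
    have : (1 : ℝ) ≤ r := by exact_mod_cast i.pos
    linarith
  rw [sscCone, Set.mem_ofPred_eq, enorm'_one_sub_single, sum_one_sub_single,
    Real.mul_self_sqrt hr]

theorem eq_zero_of_dotProduct_eq_zero_of_pos {n : Type*} [Fintype n] {a y : n → ℝ}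
    (ha : ∀ j, 0 < a j) (hy : ∀ j, 0 ≤ y j) (h : a ⬝ᵥ y = 0) : y = 0 := by
  have hterms := (Finset.sum_eq_zero_iff_of_nonneg fun j _ => mul_nonneg (ha j).le (hy j)).mp h
  funext j
  exact (mul_eq_zero.mp (hterms j (Finset.mem_univ j))).resolve_left (ha j).ne'

theorem eq_zero_of_mem_coneOf_of_apply_eq_zero {r n : ℕ} {H : Matrix (Fin r) (Fin n) ℝ}
    {i : Fin r} (hrow : ∀ j, 0 < H i j) {x : Fin r → ℝ} (hx : x ∈ coneOf H)
    (hxi : x i = 0) : x = 0 := by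
  obtain ⟨y, hy, rfl⟩ := hx
  rw [eq_zero_of_dotProduct_eq_zero_of_pos hrow hy hxi, Matrix.mulVec_zero]

/-- If `H ≥ 0` satisfies SSC1 with `r ≥ 2`, then every row of `H`
has at least one zero entry. -/
theorem row_has_zero_of_ssc1 {r n : ℕ} (hr : 2 ≤ r) (H : Matrix (Fin r) (Fin n) ℝ)
    (hH : ∀ i j, 0 ≤ H i j) (hssc1 : sscCone r ⊆ coneOf H) :
    ∀ i : Fin r, ∃ j : Fin n, H i j = 0 := by
  intro i
  by_contra! hne
  have hrow : ∀ j, 0 < H i j := fun j => (hH i j).lt_of_ne (hne j).symm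
  obtain ⟨i', hi'⟩ : ∃ i', i' ≠ i :=
    Fintype.exists_ne_of_one_lt_card (by rw [Fintype.card_fin]; omega) i
  have hzero := eq_zero_of_mem_coneOf_of_apply_eq_zero hrow
    (hssc1 (one_sub_single_mem_sscCone i)) (by simp)
  simpa [hi'] using congrFun hzero i'
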